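/- Let X ∈ B(L²(𝕋)) satisfy X M_z* P₋ = M_z* X P₋, where P₋ = I − P₊. Then ψ := z·X(z̄) satisfies ψ ∈ L∞(𝕋) with ‖ψ‖_∞ ≤ ‖X‖, and X f = ψ f for all f ∈ H²(𝕋)^⊥, i.e. X P₋ = M_ψ P₋. -/

import Mathlib

open MeasureTheory Complex AddCircle
open scoped InnerProductSpace ENNReal Real

noncomputable section

namespace PaperTH

instance fact2pi : Fact (0 < 2 * Real.pi) := ⟨by positivity⟩

/-- The circle, as `ℝ / 2πℤ`. -/
abbrev 𝕋c := AddCircle (2 * Real.pi)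

/-- The normalized Lebesgue (Haar) measure on the circle. -/
abbrev μc : Measure 𝕋c := haarAddCircle

/-- `L²(𝕋)`. -/
abbrev L2 := Lp ℂ 2 μc

/-- The Hardy space `H²(𝕋)`: members of `L²(𝕋)` all of whose Fourier coefficients of
negative index vanish. -/
def Hardy : Submodule ℂ L2 where
  carrier := {f | ∀ n : ℤ, n < 0 → fourierCoeff (⇑f) n = 0}
  add_mem' := by
    intro f g hf hg n hn
    have hf' := hf n hn
    have hg' := hg n hn
    rw [← fourierBasis_repr] at hf' hg' ⊢
    rw [map_add, lp.coeFn_add, Pi.add_apply, hf', hg', add_zero]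
  zero_mem' := by
    intro n hn
    rw [← fourierBasis_repr, map_zero, lp.coeFn_zero, Pi.zero_apply]
  smul_mem' := by
    intro c f hf n hn
    have hf' := hf n hn
    rw [← fourierBasis_repr] at hf' ⊢
    rw [_root_.map_smul, lp.coeFn_smul, Pi.smul_apply, hf', smul_zero]

theorem isClosed_Hardy : IsClosed (Hardy : Set L2) := by
  have h : (Hardy : Set L2) =
      ⋂ (n : ℤ) (_ : n < 0), ((innerSL ℂ (fourierBasis n)) ⁻¹' {(0 : ℂ)}) := by
    ext f
    simp only [Set.mem_iInter, Set.mem_preimage, Set.mem_singleton_iff, SetLike.mem_coe]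
    constructor
    · intro hf n hn
      have := hf n hn
      rw [← fourierBasis_repr, fourierBasis.repr_apply_apply] at this
      simpa using this
    · intro hf n hn
      have := hf n hn
      rw [← fourierBasis_repr, fourierBasis.repr_apply_apply]
      simpa using this
  rw [h]
  exact isClosed_iInter fun n => isClosed_iInter fun _ =>
    (isClosed_singleton).preimage (innerSL ℂ (fourierBasis n)).continuous

instance : CompleteSpace Hardy := isClosed_Hardy.completeSpace_coe

/-- The Szegő projection `P₊ : L²(𝕋) → L²(𝕋)` onto the Hardy space. -/
def Pplus : L2 →L[ℂ] L2 := Hardy.subtypeL.comp (Submodule.orthogonalProjectionOnto Hardy)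

/-- `P₋ = I - P₊`. -/
def Pminus : L2 →L[ℂ] L2 := ContinuousLinearMap.id ℂ L2 - Pplus

/-- Underlying function of the multiplication operator. -/
def MopFun (φ : 𝕋c → ℂ) (hφ : MemLp φ ∞ μc) (f : L2) : L2 :=
  ((Lp.memLp f).smul (r := 2) hφ).toLp (φ • ⇑f)

theorem MopFun_coeFn (φ : 𝕋c → ℂ) (hφ : MemLp φ ∞ μc) (f : L2) :
    ⇑(MopFun φ hφ f) =ᵐ[μc] φ • ⇑f := MemLp.coeFn_toLp _

theorem MopFun_add (φ : 𝕋c → ℂ) (hφ : MemLp φ ∞ μc) (f g : L2) :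
    MopFun φ hφ (f + g) = MopFun φ hφ f + MopFun φ hφ g := by
  apply Lp.ext
  filter_upwards [MopFun_coeFn φ hφ (f + g), MopFun_coeFn φ hφ f, MopFun_coeFn φ hφ g,
    Lp.coeFn_add f g, Lp.coeFn_add (MopFun φ hφ f) (MopFun φ hφ g)] with x h1 h2 h3 h4 h5
  simp only [h1, h5, Pi.add_apply, h2, h3, Pi.smul_apply, Pi.mul_apply, smul_eq_mul, h4]
  ring

theorem MopFun_smul (φ : 𝕋c → ℂ) (hφ : MemLp φ ∞ μc) (c : ℂ) (f : L2) :
    MopFun φ hφ (c • f) = c • MopFun φ hφ f := by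
  apply Lp.ext
  filter_upwards [MopFun_coeFn φ hφ (c • f), MopFun_coeFn φ hφ f,
    Lp.coeFn_smul c f, Lp.coeFn_smul c (MopFun φ hφ f)] with x h1 h2 h3 h4
  simp only [h1, h4, Pi.smul_apply, Pi.mul_apply, h2, h3, smul_eq_mul]
  ring

theorem MopFun_norm (φ : 𝕋c → ℂ) (hφ : MemLp φ ∞ μc) (f : L2) :
    ‖MopFun φ hφ f‖ ≤ (eLpNorm φ ∞ μc).toReal * ‖f‖ := by
  have hrfl : MopFun φ hφ f = ((Lp.memLp f).smul (r := 2) hφ).toLp (φ • ⇑f) := rfl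
  rw [hrfl, Lp.norm_toLp (φ • ⇑f) ((Lp.memLp f).smul (r := 2) hφ), Lp.norm_def]
  have hb : eLpNorm (φ • ⇑f) 2 μc ≤ eLpNorm φ ∞ μc * eLpNorm (⇑f) 2 μc :=
    eLpNorm_smul_le_eLpNorm_top_mul_eLpNorm 2 (Lp.aestronglyMeasurable f) φ
  have hfin : eLpNorm φ ∞ μc * eLpNorm (⇑f) 2 μc ≠ ∞ :=
    ENNReal.mul_ne_top hφ.eLpNorm_ne_top (Lp.eLpNorm_ne_top f)
  calc (eLpNorm (φ • ⇑f) 2 μc).toReal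
      ≤ (eLpNorm φ ∞ μc * eLpNorm (⇑f) 2 μc).toReal := ENNReal.toReal_mono hfin hb
    _ = (eLpNorm φ ∞ μc).toReal * (eLpNorm (⇑f) 2 μc).toReal := ENNReal.toReal_mul

/-- The multiplication (Laurent) operator `M_φ` on `L²(𝕋)` with symbol `φ ∈ L∞(𝕋)`. -/
def Mop (φ : 𝕋c → ℂ) (hφ : MemLp φ ∞ μc) : L2 →L[ℂ] L2 :=
  LinearMap.mkContinuous
    { toFun := MopFun φ hφ
      map_add' := MopFun_add φ hφ
      map_smul' := MopFun_smul φ hφ }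
    (eLpNorm φ ∞ μc).toReal
    (fun f => MopFun_norm φ hφ f)

theorem Mop_coeFn (φ : 𝕋c → ℂ) (hφ : MemLp φ ∞ μc) (f : L2) :
    ⇑(Mop φ hφ f) =ᵐ[μc] fun x => φ x * f x :=
  MopFun_coeFn φ hφ f

/-- The conjugation operator `J : L²(𝕋) → L²(𝕋)`, `(Jf)(z) = f(z̄)`
(composition with `x ↦ -x` on the additive circle). -/
def Jop : L2 →L[ℂ] L2 :=
  LinearMap.mkContinuous
    { toFun := fun f =>
        Lp.compMeasurePreserving (fun x : 𝕋c => -x) (Measure.measurePreserving_neg μc) f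
      map_add' := by
        intro f g
        exact map_add (Lp.compMeasurePreserving _ (Measure.measurePreserving_neg μc)) f g
      map_smul' := by
        intro c f
        apply Lp.ext
        simp only [RingHom.id_apply]
        have hmp := Measure.measurePreserving_neg (μ := μc)
        have h1 := Lp.coeFn_compMeasurePreserving (μ := μc) (c • f) hmp
        have h2 := Lp.coeFn_compMeasurePreserving (μ := μc) f hmp
        have h3 : ⇑(c • f) ∘ (fun x : 𝕋c => -x) =ᵐ[μc] (c • ⇑f) ∘ (fun x : 𝕋c => -x) :=
          hmp.quasiMeasurePreserving.ae_eq_comp (Lp.coeFn_smul c f)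
        have h4 : (c • ⇑f) ∘ (fun x : 𝕋c => -x) = c • (⇑f ∘ fun x : 𝕋c => -x) := rfl
        have h5 : c • (⇑f ∘ fun x : 𝕋c => -x) =ᵐ[μc]
            c • ⇑(Lp.compMeasurePreserving (fun x : 𝕋c => -x) hmp f) :=
          h2.symm.const_smul c
        exact ((h1.trans h3).trans ((h4 ▸ h5 : _))).trans (Lp.coeFn_smul c _).symm }
    1
    (by
      intro f
      simp only [LinearMap.coe_mk, AddHom.coe_mk, one_mul]
      exact le_of_eq (Lp.norm_compMeasurePreserving f _))

/-- The Toeplitz operator `T_φ = P₊ M_φ |_{H²}` with symbol `φ ∈ L∞(𝕋)`. -/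
def Toep (φ : 𝕋c → ℂ) (hφ : MemLp φ ∞ μc) : Hardy →L[ℂ] Hardy :=
  (Submodule.orthogonalProjectionOnto Hardy).comp ((Mop φ hφ).comp Hardy.subtypeL)

/-- The Hankel operator `H_φ = P₊ M_φ J |_{H²}` with symbol `φ ∈ L∞(𝕋)`. -/
def Hank (φ : 𝕋c → ℂ) (hφ : MemLp φ ∞ μc) : Hardy →L[ℂ] Hardy :=
  (Submodule.orthogonalProjectionOnto Hardy).comp ((Mop φ hφ).comp (Jop.comp Hardy.subtypeL))

/-- The coordinate function `z` on the circle. -/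
def zFun : 𝕋c → ℂ := fun x => fourier 1 x

theorem zFun_memℒp : MemLp zFun ∞ μc := by
  refine memLp_top_of_bound ((fourier 1).continuous.aestronglyMeasurable) 1
    (Filter.Eventually.of_forall fun x => ?_)
  simp only [zFun, fourier_apply, Circle.norm_coe, le_refl]

/-- The unilateral shift `T_z`. -/
def Tz : Hardy →L[ℂ] Hardy := Toep zFun zFun_memℒp

/-- The bilateral shift `M_z` on `L²(𝕋)`. -/
def Mz : L2 →L[ℂ] L2 := Mop zFun zFun_memℒp

/-- `A` is a Toeplitz + Hankel operator. -/
def IsToepPlusHank (A : Hardy →L[ℂ] Hardy) : Prop :=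
  ∃ (φ ψ : 𝕋c → ℂ) (hφ : MemLp φ ∞ μc) (hψ : MemLp ψ ∞ μc), A = Toep φ hφ + Hank ψ hψ

/-- `φ` belongs to `H^∞`: it is essentially bounded and all its negative Fourier
coefficients vanish. -/
def IsHinf (φ : 𝕋c → ℂ) : Prop :=
  MemLp φ ∞ μc ∧ ∀ n : ℤ, n < 0 → fourierCoeff φ n = 0

/-- `θ` is an inner function: `θ ∈ H^∞` and `|θ| = 1` a.e. on the circle. -/
def IsInner (θ : 𝕋c → ℂ) : Prop :=
  IsHinf θ ∧ ∀ᵐ x ∂μc, ‖θ x‖ = 1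

theorem Mop_norm_of_inner {θ : 𝕋c → ℂ} (hθ : IsInner θ) (f : L2) :
    ‖Mop θ hθ.1.1 f‖ = ‖f‖ := by
  have h1 : ⇑(Mop θ hθ.1.1 f) =ᵐ[μc] θ • ⇑f := MopFun_coeFn θ hθ.1.1 f
  rw [Lp.norm_def, Lp.norm_def]
  congr 1
  rw [eLpNorm_congr_ae h1]
  apply eLpNorm_congr_norm_ae
  filter_upwards [hθ.2] with x hx
  simp [norm_smul, hx]

/-- The (Beurling-type) subspace `θ H²` of the Hardy space, for an inner function `θ`. -/
def thetaSub (θ : 𝕋c → ℂ) (hθ : IsInner θ) : Submodule ℂ Hardy where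
  carrier := {f | ∃ g : Hardy, (f : L2) = Mop θ hθ.1.1 (g : L2)}
  add_mem' := by
    rintro f f' ⟨g, hg⟩ ⟨g', hg'⟩
    exact ⟨g + g', by
      simp only [Submodule.coe_add, hg, hg']
      rw [← map_add]⟩
  zero_mem' := ⟨0, by simp⟩
  smul_mem' := by
    rintro c f ⟨g, hg⟩
    exact ⟨c • g, by
      rw [Submodule.coe_smul, hg, ← (Mop θ hθ.1.1).map_smul]
      rfl⟩

theorem isClosed_thetaSub (θ : 𝕋c → ℂ) (hθ : IsInner θ) :
    IsClosed ((thetaSub θ hθ) : Set Hardy) := by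
  have hiso : Isometry (fun g : Hardy => Mop θ hθ.1.1 (g : L2)) := by
    apply Isometry.of_dist_eq
    intro g g'
    rw [dist_eq_norm, dist_eq_norm, ← map_sub, ← Submodule.coe_sub, Mop_norm_of_inner hθ]
    rfl
  have hrange : IsClosed (Set.range fun g : Hardy => Mop θ hθ.1.1 (g : L2)) :=
    hiso.isClosedEmbedding.isClosed_range
  have hset : ((thetaSub θ hθ) : Set Hardy) =
      (Subtype.val) ⁻¹' (Set.range fun g : Hardy => Mop θ hθ.1.1 (g : L2)) := by
    ext f
    constructor
    · rintro ⟨g, hg⟩; exact ⟨g, hg.symm⟩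
    · rintro ⟨g, hg⟩; exact ⟨g, hg.symm⟩
  rw [hset]
  exact hrange.preimage continuous_subtype_val

/-- The model space `𝒦_θ = H² ⊖ θH²`. -/
def modelSpace (θ : 𝕋c → ℂ) (hθ : IsInner θ) : Submodule ℂ Hardy := (thetaSub θ hθ)ᗮ

/-- The orthogonal projection of `H²` onto `θH²`. -/
def Ptheta (θ : 𝕋c → ℂ) (hθ : IsInner θ) : Hardy →L[ℂ] Hardy :=
  haveI : CompleteSpace (thetaSub θ hθ) := (isClosed_thetaSub θ hθ).completeSpace_coe
  (thetaSub θ hθ).subtypeL.comp (Submodule.orthogonalProjectionOnto (thetaSub θ hθ))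

/-- The orthogonal projection of `H²` onto the model space `𝒦_θ`. -/
def Pmodel (θ : 𝕋c → ℂ) (hθ : IsInner θ) : Hardy →L[ℂ] Hardy :=
  haveI hc : CompleteSpace (thetaSub θ hθ) := (isClosed_thetaSub θ hθ).completeSpace_coe
  haveI h2 : Submodule.HasOrthogonalProjection (modelSpace θ hθ) :=
    (inferInstance : Submodule.HasOrthogonalProjection (thetaSub θ hθ)ᗮ)
  (modelSpace θ hθ).subtypeL.comp (Submodule.orthogonalProjectionOnto (modelSpace θ hθ))

/-- The monomial `z^k`, as an element of the Hardy space. -/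
def monoH (k : ℕ) : Hardy :=
  ⟨fourierLp 2 (k : ℤ), by
    intro n hn
    rw [← fourierBasis_repr]
    have hb : (fourierLp 2 (k : ℤ) : L2) = fourierBasis (k : ℤ) := by rw [coe_fourierBasis]
    rw [hb, fourierBasis.repr_self]
    exact lp.single_apply_ne 2 (k : ℤ) _ (by omega)⟩

/-- `T_z^*`, the adjoint of the unilateral shift. -/
def TzStar : Hardy →L[ℂ] Hardy := ContinuousLinearMap.adjoint Tz

/-- `M_z^*`, the adjoint of the bilateral shift. -/
def MzStar : L2 →L[ℂ] L2 := ContinuousLinearMap.adjoint Mz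

/-- The constant function `1` as an element of `L²(𝕋)`. -/
def oneL2 : L2 := (memLp_const (1 : ℂ)).toLp (fun _ => (1 : ℂ))

/-- The function `z̄ = conj z` on the circle. -/
def zbarFun : 𝕋c → ℂ := fun x => fourier (-1) x

theorem zbarFun_memℒp : MemLp zbarFun ∞ μc := by
  refine memLp_top_of_bound ((fourier (-1)).continuous.aestronglyMeasurable) 1
    (Filter.Eventually.of_forall fun x => ?_)
  simp only [zbarFun, fourier_apply, Circle.norm_coe, le_refl]

/-- The function `z̄` as an element of `L²(𝕋)`. -/
def zbarL2 : L2 := (zbarFun_memℒp.mono_exponent le_top).toLp zbarFun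

theorem zbarsq_memℒp {ψ : 𝕋c → ℂ} (hψ : MemLp ψ ∞ μc) :
    MemLp (fun x : 𝕋c => ((starRingEnd ℂ) (zFun x) ^ 2 - 1) * ψ x) ∞ μc := by
  have hc : Continuous fun x : 𝕋c => (starRingEnd ℂ) (zFun x) ^ 2 - 1 := by
    have h1 : Continuous (zFun) := (fourier 1).continuous
    exact ((h1.star.pow 2).sub continuous_const)
  have hb : MemLp (fun x : 𝕋c => (starRingEnd ℂ) (zFun x) ^ 2 - 1) ∞ μc := by
    refine memLp_top_of_bound hc.aestronglyMeasurable 2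
      (Filter.Eventually.of_forall fun x => ?_)
    calc ‖(starRingEnd ℂ) (zFun x) ^ 2 - 1‖ ≤ ‖(starRingEnd ℂ) (zFun x) ^ 2‖ + ‖(1 : ℂ)‖ :=
          norm_sub_le _ _
      _ ≤ 2 := by
          rw [norm_pow, RCLike.norm_conj]
          simp only [zFun, fourier_apply, Circle.norm_coe, norm_one]
          norm_num
  have h2 := hψ.smul (r := ∞) hb
  have h3 : ((fun x : 𝕋c => (starRingEnd ℂ) (zFun x) ^ 2 - 1) • ψ) =
      fun x : 𝕋c => ((starRingEnd ℂ) (zFun x) ^ 2 - 1) * ψ x := by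
    funext x
    simp only [Pi.smul_apply, smul_eq_mul, Pi.mul_apply]
  exact h3 ▸ h2

/-- `A` is `θ`-paired: `A = T_φ P_{θH²} + T_ψ P_{𝒦_θ}` for some `φ, ψ ∈ H^∞`. -/
def IsThetaPaired (θ : 𝕋c → ℂ) (hθ : IsInner θ) (X : Hardy →L[ℂ] Hardy) : Prop :=
  ∃ (φ ψ : 𝕋c → ℂ) (hφ : IsHinf φ) (hψ : IsHinf ψ),
    X = (Toep φ hφ.1).comp (Ptheta θ hθ) + (Toep ψ hψ.1).comp (Pmodel θ hθ)

/-!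
Since `M_z^* = M_{z̄}` maps `H²(𝕋)^⊥` into itself, the hypothesis gives
`X(z̄^(k+1)) = z̄^k X(z̄)` for every `k`, i.e. `X f = ψ f` for trigonometric polynomials `f` with
only negative frequencies. Multiplying by a high power of `z̄` moves any trigonometric polynomial
there without changing the `L²` norms of `g` and `ψ g`, so `‖ψ g‖₂ ≤ ‖X‖ ‖g‖₂` on a dense set,
hence on all of `L²` by Fatou's lemma; testing this on indicators of superlevel sets of `|ψ|`
gives `|ψ| ≤ ‖X‖` a.e.
-/

section MultiplierBound

open Filter Topology

variable {α : Type*} [MeasurableSpace α] {μ : Measure α} {p : ℝ≥0∞} [Fact (1 ≤ p)]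
  {φ : α → ℂ} {C : ℝ}

theorem eLpNorm_mul_le_of_dense {D : Set (Lp ℂ p μ)} (hD : Dense D)
    (hφ : AEStronglyMeasurable φ μ)
    (hbound : ∀ g ∈ D, eLpNorm (φ * ⇑g) p μ ≤ ENNReal.ofReal (C * ‖g‖)) (g : Lp ℂ p μ) :
    eLpNorm (φ * ⇑g) p μ ≤ ENNReal.ofReal (C * ‖g‖) := by
  obtain ⟨u, hu_mem, hu_lim⟩ := mem_closure_iff_seq_limit.mp (hD g)
  obtain ⟨ns, hns, hae⟩ := (tendstoInMeasure_of_tendsto_Lp hu_lim).exists_seq_tendsto_ae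
  have hfatou := Lp.eLpNorm_lim_le_liminf_eLpNorm (p := p)
    (fun j => hφ.mul (Lp.aestronglyMeasurable (u (ns j)))) (φ * ⇑g)
    (by filter_upwards [hae] with x hx using tendsto_const_nhds.mul hx)
  have hlim : Tendsto (fun j => ENNReal.ofReal (C * ‖u (ns j)‖)) atTop
      (𝓝 (ENNReal.ofReal (C * ‖g‖))) :=
    ENNReal.tendsto_ofReal <| tendsto_const_nhds.mul <|
      (continuous_norm.tendsto g).comp (hu_lim.comp hns.tendsto_atTop)
  calc eLpNorm (φ * ⇑g) p μ ≤ atTop.liminf fun j => eLpNorm (φ * ⇑(u (ns j))) p μ := hfatou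
    _ ≤ atTop.liminf fun j => ENNReal.ofReal (C * ‖u (ns j)‖) :=
      liminf_le_liminf (Eventually.of_forall fun j => hbound _ (hu_mem _))
    _ = ENNReal.ofReal (C * ‖g‖) := hlim.liminf_eq

variable [IsFiniteMeasure μ]

/-- Testing the bound on the indicator of `A = {c ≤ ‖φ‖}` gives `c μ(A)^(1/p) ≤ C μ(A)^(1/p)`. -/
theorem measure_setOf_le_norm_eq_zero (hp : p ≠ ∞) (hφ : StronglyMeasurable φ) (hC : 0 ≤ C)
    (hbound : ∀ g : Lp ℂ p μ, eLpNorm (φ * ⇑g) p μ ≤ ENNReal.ofReal (C * ‖g‖))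
    {c : ℝ} (hc : C < c) : μ {x | c ≤ ‖φ x‖} = 0 := by
  set A := {x | c ≤ ‖φ x‖}
  have hp0 : p ≠ 0 := (zero_lt_one.trans_le Fact.out).ne'
  have hA : MeasurableSet A := measurableSet_le measurable_const hφ.measurable.norm
  have hAfin : μ A ≠ ∞ := measure_ne_top μ A
  set r : ℝ := 1 / p.toReal
  have hr : 0 < r := one_div_pos.mpr (ENNReal.toReal_pos hp0 hp)
  set g : Lp ℂ p μ := indicatorConstLp p hA hAfin (1 : ℂ)
  have hlow : ENNReal.ofReal c * μ A ^ r ≤ eLpNorm (φ * ⇑g) p μ := by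
    calc ENNReal.ofReal c * μ A ^ r = eLpNorm (A.indicator fun _ => (c : ℂ)) p μ := by
          rw [eLpNorm_indicator_const hA hp0 hp, ← ofReal_norm, Complex.norm_real,
            Real.norm_of_nonneg (hC.trans hc.le)]
      _ ≤ eLpNorm (φ * ⇑g) p μ := by
          refine eLpNorm_mono_ae ?_
          filter_upwards [indicatorConstLp_coeFn (p := p) (hs := hA) (hμs := hAfin) (c := (1 : ℂ))]
            with x hx
          rw [Pi.mul_apply, hx]
          by_cases hxA : x ∈ A
          · rw [Set.indicator_of_mem hxA, Set.indicator_of_mem hxA, mul_one, Complex.norm_real,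
              Real.norm_of_nonneg (hC.trans hc.le)]
            exact hxA
          · simp [hxA]
  have hup : eLpNorm (φ * ⇑g) p μ ≤ ENNReal.ofReal C * μ A ^ r := by
    refine (hbound g).trans_eq ?_
    rw [norm_indicatorConstLp hp0 hp, norm_one, one_mul, ENNReal.ofReal_mul hC, measureReal_def,
      ENNReal.toReal_rpow, ENNReal.ofReal_toReal (ENNReal.rpow_ne_top_of_nonneg hr.le hAfin)]
  by_contra hA0
  have hpos : μ A ^ r ≠ 0 := by simp [ENNReal.rpow_eq_zero_iff, hA0, hAfin, hr]
  have := (ENNReal.mul_le_mul_iff_left hpos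
    (ENNReal.rpow_ne_top_of_nonneg hr.le hAfin)).mp (hlow.trans hup)
  linarith [(ENNReal.ofReal_le_ofReal_iff hC).mp this]

theorem ae_norm_le_of_eLpNorm_mul_le (hp : p ≠ ∞) (hφ : StronglyMeasurable φ) (hC : 0 ≤ C)
    (hbound : ∀ g : Lp ℂ p μ, eLpNorm (φ * ⇑g) p μ ≤ ENNReal.ofReal (C * ‖g‖)) :
    ∀ᵐ x ∂μ, ‖φ x‖ ≤ C := by
  have hlt : ∀ k : ℕ, ∀ᵐ x ∂μ, ‖φ x‖ < C + 1 / (k + 1) := fun k => by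
    rw [ae_iff]
    simpa using measure_setOf_le_norm_eq_zero hp hφ hC hbound
      (lt_add_of_pos_right C (Nat.one_div_pos_of_nat (n := k)))
  filter_upwards [ae_all_iff.mpr hlt] with x hx
  refine le_of_forall_pos_lt_add fun ε hε => ?_
  obtain ⟨k, hk⟩ := exists_nat_one_div_lt hε
  linarith [hx k]

end MultiplierBound

theorem coeFn_fourierBasis (n : ℤ) : ⇑(fourierBasis n : L2) =ᵐ[μc] fourier n := by
  rw [coe_fourierBasis]
  exact coeFn_fourierLp 2 n

theorem Pminus_apply (f : L2) : Pminus f = f - Hardy.starProjection f := rfl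

theorem Pminus_fourierBasis_of_neg {n : ℤ} (hn : n < 0) :
    Pminus (fourierBasis n) = fourierBasis n := by
  have horth : (fourierBasis n : L2) ∈ Hardyᗮ := fun u hu => by
    rw [← inner_conj_symm, ← fourierBasis.repr_apply_apply, fourierBasis_repr, hu n hn, map_zero]
  rw [Pminus_apply, (Submodule.starProjection_apply_eq_zero_iff Hardy).mpr horth, sub_zero]

theorem Pminus_fourierBasis_of_nonneg {n : ℤ} (hn : 0 ≤ n) : Pminus (fourierBasis n) = 0 := by
  have hmem : (fourierBasis n : L2) ∈ Hardy := fun m hm => by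
    rw [← fourierBasis_repr, fourierBasis.repr_self]
    exact lp.single_apply_ne 2 n _ (by omega)
  rw [Pminus_apply, Submodule.starProjection_eq_self_iff.mpr hmem, sub_self]

theorem eLpNorm_fourier_mul (n : ℤ) (f : 𝕋c → ℂ) (p : ℝ≥0∞) :
    eLpNorm (fun x => fourier n x * f x) p μc = eLpNorm f p μc :=
  eLpNorm_congr_norm_ae <| Filter.Eventually.of_forall fun x => by
    rw [norm_mul, fourier_apply, Circle.norm_coe, one_mul]

def Mzbar : L2 →L[ℂ] L2 := Mop zbarFun zbarFun_memℒp

theorem coeFn_Mzbar (f : L2) : ⇑(Mzbar f) =ᵐ[μc] fun x => fourier (-1) x * f x :=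
  Mop_coeFn _ _ f

theorem MzStar_eq_Mzbar : MzStar = Mzbar := by
  refine ((ContinuousLinearMap.eq_adjoint_iff Mzbar Mz).mpr fun f g => ?_).symm
  rw [L2.inner_def, L2.inner_def]
  refine integral_congr_ae ?_
  filter_upwards [coeFn_Mzbar f, Mop_coeFn zFun zFun_memℒp g] with x hf hg
  rw [RCLike.inner_apply, RCLike.inner_apply, hf, show Mz g x = zFun x * g x from hg, map_mul,
    ← fourier_neg, neg_neg]
  simp only [zFun]
  ring

theorem norm_Mzbar (f : L2) : ‖Mzbar f‖ = ‖f‖ := by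
  rw [Lp.norm_def, Lp.norm_def, eLpNorm_congr_ae (coeFn_Mzbar f), eLpNorm_fourier_mul]

theorem eLpNorm_mul_Mzbar_pow (φ : 𝕋c → ℂ) (M : ℕ) (f : L2) (p : ℝ≥0∞) :
    eLpNorm (φ * ⇑((Mzbar ^ M) f)) p μc = eLpNorm (φ * ⇑f) p μc := by
  induction M with
  | zero => simp
  | succ M ih =>
    rw [pow_succ', mul_apply_eq_comp, ← ih, ← eLpNorm_fourier_mul (-1) (φ * ⇑((Mzbar ^ M) f))]
    refine eLpNorm_congr_ae ?_
    filter_upwards [coeFn_Mzbar ((Mzbar ^ M) f)] with x hx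
    rw [Pi.mul_apply, hx, Pi.mul_apply]
    ring

theorem norm_Mzbar_pow (M : ℕ) (f : L2) : ‖(Mzbar ^ M) f‖ = ‖f‖ := by
  induction M with
  | zero => simp
  | succ M ih => rw [pow_succ', mul_apply_eq_comp, norm_Mzbar, ih]

theorem Mzbar_fourierBasis (n : ℤ) : Mzbar (fourierBasis n) = fourierBasis (n - 1) := by
  refine Lp.ext ?_
  filter_upwards [coeFn_Mzbar (fourierBasis n), coeFn_fourierBasis n,
    coeFn_fourierBasis (n - 1)] with x h h' h''
  rw [h, h', h'', ← fourier_add, neg_add_eq_sub]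

theorem Mzbar_pow_fourierBasis (M : ℕ) (n : ℤ) :
    (Mzbar ^ M) (fourierBasis n) = fourierBasis (n - M) := by
  induction M with
  | zero => simp
  | succ M ih => rw [pow_succ', mul_apply_eq_comp, ih, Mzbar_fourierBasis]; push_cast; ring_nf

def negFreqSpan : Submodule ℂ L2 := Submodule.span ℂ (fourierBasis '' Set.Iio 0)

theorem exists_Mzbar_pow_mem_negFreqSpan {g : L2}
    (hg : g ∈ Submodule.span ℂ (Set.range fourierBasis)) :
    ∃ N : ℕ, ∀ M ≥ N, (Mzbar ^ M) g ∈ negFreqSpan := by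
  induction hg using Submodule.span_induction with
  | mem _ hf =>
    obtain ⟨n, rfl⟩ := hf
    exact ⟨(n + 1).toNat, fun M hM => Submodule.subset_span
      ⟨n - M, by simp only [Set.mem_Iio]; omega, (Mzbar_pow_fourierBasis M n).symm⟩⟩
  | zero => exact ⟨0, fun M _ => by simp⟩
  | add f g _ _ hf hg =>
    obtain ⟨N, hN⟩ := hf
    obtain ⟨N', hN'⟩ := hg
    exact ⟨max N N', fun M hM => by
      rw [map_add]
      exact add_mem (hN M (le_of_max_le_left hM)) (hN' M (le_of_max_le_right hM))⟩
  | smul c f _ hf =>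
    obtain ⟨N, hN⟩ := hf
    exact ⟨N, fun M hM => by rw [map_smul]; exact Submodule.smul_mem _ c (hN M hM)⟩

def coanalyticSymbol (X : L2 →L[ℂ] L2) : 𝕋c → ℂ := fun x => zFun x * X zbarL2 x

theorem stronglyMeasurable_coanalyticSymbol (X : L2 →L[ℂ] L2) :
    StronglyMeasurable (coanalyticSymbol X) :=
  (fourier 1).continuous.stronglyMeasurable.mul (Lp.stronglyMeasurable _)

theorem zbarL2_eq_fourierBasis : zbarL2 = fourierBasis (-1) := by
  refine Lp.ext ?_
  filter_upwards [MemLp.coeFn_toLp (zbarFun_memℒp.mono_exponent le_top),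
    coeFn_fourierBasis (-1)] with x h h'
  rw [zbarL2, h, h', zbarFun]

section ShiftIntertwining

variable {X : L2 →L[ℂ] L2} (h : X.comp (MzStar.comp Pminus) = MzStar.comp (X.comp Pminus))
include h

theorem map_Mzbar_of_Pminus_eq {g : L2} (hg : Pminus g = g) : X (Mzbar g) = Mzbar (X g) := by
  simpa only [ContinuousLinearMap.comp_apply, hg, MzStar_eq_Mzbar] using
    DFunLike.congr_fun h g

theorem coeFn_map_fourierBasis_of_neg {n : ℤ} (hn : n < 0) :
    ⇑(X (fourierBasis n)) =ᵐ[μc] coanalyticSymbol X * ⇑(fourierBasis n : L2) := by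
  obtain ⟨k, rfl⟩ : ∃ k : ℕ, n = -1 - k := ⟨(-1 - n).toNat, by omega⟩
  induction k with
  | zero =>
    rw [Nat.cast_zero, sub_zero]
    filter_upwards [coeFn_fourierBasis (-1)] with x hx
    rw [Pi.mul_apply, hx, coanalyticSymbol, zFun, zbarL2_eq_fourierBasis,
      mul_right_comm, ← fourier_add, add_neg_cancel, fourier_zero, one_mul]
  | succ k ih =>
    have hprev : (-1 - (k + 1 : ℕ) : ℤ) = -1 - k - 1 := by push_cast; ring
    rw [hprev, ← Mzbar_fourierBasis, map_Mzbar_of_Pminus_eq h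
      (Pminus_fourierBasis_of_neg (by omega))]
    filter_upwards [coeFn_Mzbar (X (fourierBasis (-1 - k))), coeFn_Mzbar (fourierBasis (-1 - k)),
      ih (by omega)] with x h₁ h₂ h₃
    rw [Pi.mul_apply, h₁, h₂, h₃, Pi.mul_apply]
    ring

theorem coeFn_map_of_mem_negFreqSpan {f : L2} (hf : f ∈ negFreqSpan) :
    ⇑(X f) =ᵐ[μc] coanalyticSymbol X * ⇑f := by
  induction hf using Submodule.span_induction with
  | mem _ hg =>
    obtain ⟨n, hn, rfl⟩ := hg
    exact coeFn_map_fourierBasis_of_neg h hn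
  | zero =>
    rw [map_zero]
    filter_upwards [Lp.coeFn_zero ℂ 2 μc] with x hx
    simp
  | add f g _ _ hf hg =>
    rw [map_add]
    filter_upwards [Lp.coeFn_add (X f) (X g), Lp.coeFn_add f g, hf, hg] with x h₁ h₂ h₃ h₄
    simp only [h₁, h₂, Pi.add_apply, h₃, h₄, Pi.mul_apply, mul_add]
  | smul c f _ hf =>
    rw [map_smul]
    filter_upwards [Lp.coeFn_smul c (X f), Lp.coeFn_smul c f, hf] with x h₁ h₂ h₃
    simp only [h₁, h₂, Pi.smul_apply, h₃, Pi.mul_apply, smul_eq_mul]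
    ring

theorem eLpNorm_coanalyticSymbol_mul_le (g : L2) :
    eLpNorm (coanalyticSymbol X * ⇑g) 2 μc ≤ ENNReal.ofReal (‖X‖ * ‖g‖) := by
  refine eLpNorm_mul_le_of_dense
    (Submodule.dense_iff_topologicalClosure_eq_top.mpr fourierBasis.dense_span)
    (stronglyMeasurable_coanalyticSymbol X).aestronglyMeasurable (fun g hg => ?_) g
  obtain ⟨M, hM⟩ := exists_Mzbar_pow_mem_negFreqSpan hg
  set f := (Mzbar ^ M) g
  calc eLpNorm (coanalyticSymbol X * ⇑g) 2 μc
      = eLpNorm (coanalyticSymbol X * ⇑f) 2 μc := (eLpNorm_mul_Mzbar_pow _ M g 2).symm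
    _ = eLpNorm (X f) 2 μc :=
      (eLpNorm_congr_ae (coeFn_map_of_mem_negFreqSpan h (hM M le_rfl))).symm
    _ = ENNReal.ofReal ‖X f‖ := by rw [Lp.norm_def, ENNReal.ofReal_toReal (Lp.eLpNorm_ne_top _)]
    _ ≤ ENNReal.ofReal (‖X‖ * ‖f‖) := ENNReal.ofReal_le_ofReal (X.le_opNorm f)
    _ = ENNReal.ofReal (‖X‖ * ‖g‖) := by rw [norm_Mzbar_pow]

end ShiftIntertwining

/-- **Theorem.** If `X M_z* P₋ = M_z* X P₋` then `ψ := z ⬝ X(z̄)` is (essentially) bounded with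
`‖ψ‖_∞ ≤ ‖X‖`, and `X P₋ = M_ψ P₋`. -/
theorem coanalytic_part_of_paired (X : L2 →L[ℂ] L2)
    (h : X.comp (MzStar.comp Pminus) = MzStar.comp (X.comp Pminus)) :
    ∃ hψ : MemLp (fun x : 𝕋c => zFun x * (X zbarL2 : 𝕋c → ℂ) x) ∞ μc,
      (eLpNorm (fun x : 𝕋c => zFun x * (X zbarL2 : 𝕋c → ℂ) x) ∞ μc).toReal ≤ ‖X‖ ∧
      X.comp Pminus = (Mop (fun x : 𝕋c => zFun x * (X zbarL2 : 𝕋c → ℂ) x) hψ).comp Pminus := by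
  have hbound : ∀ᵐ x ∂μc, ‖coanalyticSymbol X x‖ ≤ ‖X‖ :=
    ae_norm_le_of_eLpNorm_mul_le ENNReal.ofNat_ne_top (stronglyMeasurable_coanalyticSymbol X)
      (norm_nonneg X) (eLpNorm_coanalyticSymbol_mul_le h)
  have hψ : MemLp (coanalyticSymbol X) ∞ μc :=
    memLp_top_of_bound (stronglyMeasurable_coanalyticSymbol X).aestronglyMeasurable _ hbound
  refine ⟨hψ, ENNReal.toReal_le_of_le_ofReal (norm_nonneg X) ?_, ?_⟩
  · rw [eLpNorm_exponent_top]
    exact eLpNormEssSup_le_of_ae_bound hbound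
  refine ContinuousLinearMap.ext_on
    (Submodule.dense_iff_topologicalClosure_eq_top.mpr fourierBasis.dense_span) ?_
  rintro _ ⟨n, rfl⟩
  rcases lt_or_ge n 0 with hn | hn
  · rw [ContinuousLinearMap.comp_apply, ContinuousLinearMap.comp_apply,
      Pminus_fourierBasis_of_neg hn]
    exact Lp.ext ((coeFn_map_fourierBasis_of_neg h hn).trans (Mop_coeFn _ hψ _).symm)
  · rw [ContinuousLinearMap.comp_apply, ContinuousLinearMap.comp_apply,
      Pminus_fourierBasis_of_nonneg hn, map_zero, map_zero]

end PaperTH
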